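/- Let P be a simple polygon in ℝ², let d > 0 and ε > 0, and let s_0 ∈ P lie on the boundary of the convex hull of P. Let X ⊆ P be a finite set containing s_0 and every vertex of P, such that any two consecutive points of X along P are at boundary distance at most ε. Suppose there exists a solution for range d containing s_0, and let k be the minimum number of stations among all solutions for range d that contain s_0. Then: (i) every solution for range d whose stations all lie in X and include s_0 has at least k stations; and (ii) there exists a solution for range d + ε whose stations all lie in X, include s_0, and number at most k. In particular, if the minimum numbers of stations among X-station solutions containing s_0 for ranges d and d + ε are equal, then this common value equals k. -/

import Mathlib

/-!
Common setting: simple polygons in the plane, clockwise boundary order,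
drone distance, hop distance, bridges, projections, solutions (sets of base
stations with connecting paths whose concatenation encloses the polygon),
and the greedy (OptSol) sequence.
-/

open scoped ENNReal

noncomputable section

abbrev Plane : Type := EuclideanSpace ℝ (Fin 2)

/-- Twice the signed area of a closed polygonal chain (shoelace formula);
it is negative exactly for clockwise traversal. -/
def shoelace (l : List Plane) : ℝ :=
  ((l.zip (l.rotate 1)).map fun p => p.1 0 * p.2 1 - p.2 0 * p.1 1).sum

/-- A path from `a` to `b` (parametrized on `[0,1]`) whose image lies in `A`. -/
def IsPathIn (A : Set Plane) (a b : Plane) (f : ℝ → Plane) : Prop :=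
  ContinuousOn f (Set.Icc 0 1) ∧ f 0 = a ∧ f 1 = b ∧ f '' Set.Icc 0 1 ⊆ A

/-- Homotopy of paths inside `A`, relative to the endpoints `a`, `b`. -/
def HomotopicRelIn (A : Set Plane) (a b : Plane) (f g : ℝ → Plane) : Prop :=
  ∃ H : ℝ × ℝ → Plane,
    ContinuousOn H (Set.Icc 0 1 ×ˢ Set.Icc 0 1) ∧
    H '' (Set.Icc 0 1 ×ˢ Set.Icc 0 1) ⊆ A ∧
    (∀ t ∈ Set.Icc (0:ℝ) 1, H (0, t) = f t ∧ H (1, t) = g t) ∧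
    (∀ s ∈ Set.Icc (0:ℝ) 1, H (s, 0) = a ∧ H (s, 1) = b)

/-- A loop (as a function on `[0,1]`) is null-homotopic in `A`. -/
def IsNullHomotopicIn (A : Set Plane) (f : ℝ → Plane) : Prop :=
  ∃ H : ℝ × ℝ → Plane,
    ContinuousOn H (Set.Icc 0 1 ×ˢ Set.Icc 0 1) ∧
    H '' (Set.Icc 0 1 ×ˢ Set.Icc 0 1) ⊆ A ∧
    (∀ t ∈ Set.Icc (0:ℝ) 1, H (0, t) = f t) ∧
    (∀ s ∈ Set.Icc (0:ℝ) 1, H (s, 0) = H (s, 1)) ∧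
    ∃ c, ∀ t ∈ Set.Icc (0:ℝ) 1, H (1, t) = c

/-- Concatenation of `k` paths (each parametrized on `[0,1]`) into a single
function parametrized on `[0,1]`. -/
def concatLoop (k : ℕ) (π : ℕ → ℝ → Plane) : ℝ → Plane := fun t =>
  let i : ℕ := min ⌊t * (k : ℝ)⌋₊ (k - 1)
  π i (t * (k : ℝ) - (i : ℝ))

/-- The piecewise-linear path through the points `c 0, c 1, …, c m`,
parametrized on `[0,1]`. -/
def polyPath (m : ℕ) (c : ℕ → Plane) : ℝ → Plane := fun t =>
  let i : ℕ := min ⌊t * (m : ℝ)⌋₊ (m - 1)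
  c i + (t * (m : ℝ) - (i : ℝ)) • (c (i + 1) - c i)

/-- A simple polygon in the plane: a closed polygonal curve `γ : [0, L] → ℝ²`,
parametrized by arclength, injective on `[0, L)`, with finitely many vertices
(the parameters in `vparams`), affine between consecutive vertices, and
traversed clockwise (negative shoelace signed area). -/
structure SimplePolygon where
  L : ℝ
  L_pos : 0 < L
  γ : ℝ → Plane
  continuousOn_γ : ContinuousOn γ (Set.Icc 0 L)
  closed : γ 0 = γ L
  injOn : Set.InjOn γ (Set.Ico 0 L)
  arclength : ∀ ⦃s t : ℝ⦄, 0 ≤ s → s ≤ t → t ≤ L →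
    eVariationOn γ (Set.Icc s t) = ENNReal.ofReal (t - s)
  vparams : Finset ℝ
  vparams_subset : ↑vparams ⊆ Set.Ico 0 L
  zero_mem_vparams : (0 : ℝ) ∈ vparams
  piecewise_linear : ∀ ⦃s t : ℝ⦄, 0 ≤ s → s < t → t ≤ L →
    (∀ w ∈ vparams, w ∉ Set.Ioo s t) →
    ∀ u ∈ Set.Icc s t, γ u = γ s + ((u - s) / (t - s)) • (γ t - γ s)
  clockwise : shoelace ((vparams.sort (· ≤ ·)).map γ) < 0

namespace SimplePolygon

variable (P : SimplePolygon)

/-- The polygon `P`, i.e. the boundary curve, as a subset of the plane. -/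
def toSet : Set Plane := P.γ '' Set.Icc 0 P.L

/-- Periodic extension of the boundary parametrization to all of `ℝ`. -/
def γext (t : ℝ) : Plane := P.γ (Int.fract (t / P.L) * P.L)

/-- `Int(P)`: the union of the bounded components of the complement. -/
def intSet : Set Plane :=
  {p | p ∉ P.toSet ∧ Bornology.IsBounded (connectedComponentIn P.toSetᶜ p)}

/-- `Ext(P)`: the unbounded component of the complement. -/
def extSet : Set Plane :=
  {p | p ∉ P.toSet ∧ ¬ Bornology.IsBounded (connectedComponentIn P.toSetᶜ p)}

/-- `S = P ∪ Ext(P)`. -/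
def region : Set Plane := P.toSet ∪ P.extSet

open Classical in
/-- The parameter in `[0, L)` of a point of the polygon. -/
def param (p : Plane) : ℝ :=
  if h : ∃ t, t ∈ Set.Ico 0 P.L ∧ P.γ t = p then h.choose else 0

/-- Clockwise boundary offset of a point `p` of `P` from the base parameter
`t0`: the point of `P` at offset `0` is the base point, and offsets increase
clockwise up to `L`; `a ⪯ b` (based at `γ t0`) iff
`ordFrom t0 a ≤ ordFrom t0 b`. -/
def ordFrom (t0 : ℝ) (p : Plane) : ℝ :=
  if P.param p < t0 then P.param p + P.L - t0 else P.param p - t0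

/-- The clockwise interval `[a, b]` of the boundary. -/
def interval (a b : Plane) : Set Plane :=
  {p | p ∈ P.toSet ∧ P.ordFrom (P.param a) p ≤ P.ordFrom (P.param a) b}

/-- Clockwise parametrization of the boundary arc between offsets `u ≤ v`
(relative to the base parameter `t0`). -/
def cwParam (t0 u v : ℝ) : ℝ → Plane := fun t => P.γext (t0 + u + t * (v - u))

/-- A clockwise path in `S` between the boundary points at offsets `u ≤ v`
from the base parameter `t0`: a path in `S` homotopic rel endpoints, within
`S`, to the clockwise boundary arc from offset `u` to offset `v`. -/
def IsCWPath (t0 u v : ℝ) (f : ℝ → Plane) : Prop :=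
  IsPathIn P.region (P.γext (t0 + u)) (P.γext (t0 + v)) f ∧
  HomotopicRelIn P.region (P.γext (t0 + u)) (P.γext (t0 + v)) f (P.cwParam t0 u v)

/-- The drone distance `δ` between the boundary points at offsets `u ≤ v`
(relative to the base parameter `t0`): the infimum of lengths (total
variations) of clockwise paths. -/
def droneDistO (t0 u v : ℝ) : ℝ≥0∞ :=
  sInf {l | ∃ f : ℝ → Plane, P.IsCWPath t0 u v f ∧ eVariationOn f (Set.Icc 0 1) = l}

/-- A monotone chain of `k` hops, each of drone distance at most `d`. -/
def HopChainLE (t0 d u v : ℝ) (k : ℕ) : Prop :=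
  ∃ q : ℕ → ℝ, q 0 = u ∧ q k = v ∧ (∀ i ≤ k, q i ∈ Set.Icc 0 P.L) ∧
    (∀ i < k, q i ≤ q (i + 1)) ∧
    (∀ i < k, P.droneDistO t0 (q i) (q (i + 1)) ≤ ENNReal.ofReal d)

/-- The hop distance `δ_d` between offsets `u ≤ v`: the least number of hops
of drone distance at most `d` each, in a monotone chain from `u` to `v`. -/
def hopDistO (t0 d u v : ℝ) : ℕ∞ :=
  sInf {n : ℕ∞ | ∃ m : ℕ, n = m ∧ P.HopChainLE t0 d u v m}

/-- `p` is a vertex of `P`. -/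
def IsVertex (p : Plane) : Prop := ∃ u ∈ P.vparams, P.γ u = p

/-- `u`, `v` are the parameters of the endpoints of an edge of the polygon. -/
def IsEdgeParams (u v : ℝ) : Prop :=
  u ∈ P.vparams ∧ (v ∈ P.vparams ∨ v = P.L) ∧ u < v ∧ v ≤ P.L ∧
    ∀ w ∈ P.vparams, w ∉ Set.Ioo u v

/-- A bridge: an open segment contained in `Ext(P)` with endpoints on `P`. -/
def IsBridge (a b : Plane) : Prop :=
  a ≠ b ∧ a ∈ P.toSet ∧ b ∈ P.toSet ∧ openSegment ℝ a b ⊆ P.extSet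

/-- `x` is the projection of a vertex of `P` onto an edge of `P`, relative to
the base parameter `t0` and the range `d`. -/
def IsVertexProjection (t0 d : ℝ) (x : Plane) : Prop :=
  ∃ u v p, P.IsEdgeParams u v ∧ x ∈ P.γ '' Set.Icc u v ∧ P.IsVertex p ∧
    P.ordFrom t0 x ≤ P.ordFrom t0 p ∧ P.IsBridge x p ∧ dist x p ≤ d ∧
    inner ℝ (p - x) (P.γ v - P.γ u) = (0 : ℝ)

/-- `x` is the `d`-projection of an edge of `P` onto an edge of `P`. -/
def IsEdgeDProjection (d : ℝ) (x : Plane) : Prop :=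
  ∃ u v u' v' y, P.IsEdgeParams u v ∧ P.IsEdgeParams u' v' ∧
    x ∈ P.γ '' Set.Icc u v ∧ y ∈ P.γ '' Set.Icc u' v' ∧
    P.IsBridge x y ∧ dist x y = d ∧ inner ℝ (y - x) (P.γ v - P.γ u) = (0 : ℝ)

/-- `x` is orthogonally visible from the edge of `P` with parameters `u, v`:
some point `q` of that edge is joined to `x` by a segment perpendicular to
the edge whose relative interior lies in `Ext(P)`. -/
def OrthVisibleFrom (u v : ℝ) (x : Plane) : Prop :=
  ∃ q ∈ P.γ '' Set.Icc u v, inner ℝ (x - q) (P.γ v - P.γ u) = (0 : ℝ) ∧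
    openSegment ℝ q x ⊆ P.extSet

/-- A solution with `k` stations for range `d`: stations `s 0, …, s (k-1)` on
`P`, connected cyclically by paths `π i` in `S` of length at most `d`, whose
concatenation encloses `P` (is not null-homotopic in `ℝ² \ {q}` for any
`q ∈ Int(P)`). -/
def IsSolution (d : ℝ) (k : ℕ) (s : ℕ → Plane) (π : ℕ → ℝ → Plane) : Prop :=
  0 < k ∧ (∀ i < k, s i ∈ P.toSet) ∧
  (∀ i < k, IsPathIn P.region (s i) (s ((i + 1) % k)) (π i)) ∧
  (∀ i < k, eVariationOn (π i) (Set.Icc 0 1) ≤ ENNReal.ofReal d) ∧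
  ∀ q ∈ P.intSet, ¬ IsNullHomotopicIn {x : Plane | x ≠ q} (concatLoop k π)

/-- The greedy sequence of the `OptSol` algorithm, in boundary offsets from
the base parameter `t0` (offset `0` is the base station `s_0`, offset `L` is
its wrap-around copy `s_0'`): `y 0` is the ⪯-greatest point at drone distance
at most `d` from `s 0 = 0`; for `i ≥ 1`, `y i` is the ⪯-greatest point at hop
distance at most `2` from `s (i-1)`, and `s i` is any point within drone
distance `d` of both `s (i-1)` and `y i`. -/
def IsGreedy (t0 d : ℝ) (s y : ℕ → ℝ) : Prop :=
  s 0 = 0 ∧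
  (y 0 ∈ Set.Icc 0 P.L ∧ P.droneDistO t0 0 (y 0) ≤ ENNReal.ofReal d ∧
    ∀ v ∈ Set.Icc 0 P.L, P.droneDistO t0 0 v ≤ ENNReal.ofReal d → v ≤ y 0) ∧
  ∀ i : ℕ, 1 ≤ i →
    (y i ∈ Set.Icc 0 P.L ∧ P.hopDistO t0 d (s (i - 1)) (y i) ≤ 2 ∧
      ∀ v ∈ Set.Icc 0 P.L, P.hopDistO t0 d (s (i - 1)) v ≤ 2 → v ≤ y i) ∧
    s i ∈ Set.Icc 0 P.L ∧ s (i - 1) ≤ s i ∧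
    P.droneDistO t0 (s (i - 1)) (s i) ≤ ENNReal.ofReal d ∧
    s i ≤ y i ∧ P.droneDistO t0 (s i) (y i) ≤ ENNReal.ofReal d

end SimplePolygon

/-!
Take an optimal solution through `s₀` and move every station along `P` to a nearest point of
`X` (or of `X ∪ {L}`, which is the same point of `P`); since consecutive points of `X` are at
most `ε` apart, each station moves by at most `ε / 2` of boundary length. Each connecting path is
extended by the two boundary arcs its endpoints travelled, so it grows by at most `ε`. Retracting
those arcs is a free homotopy of the enclosing loop that stays in `S`, hence avoids `Int(P)`, so
the new loop still encloses `P`. Part (i) holds because `X`-solutions are solutions, and (iii)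
combines (i) and (ii).
-/

open Set

theorem continuousOn_if_le {α β γ : Type*} [TopologicalSpace α] [LinearOrder β]
    [TopologicalSpace β] [OrderClosedTopology β] [TopologicalSpace γ] {f g : α → β}
    {F G : α → γ} {s : Set α} (hf : Continuous f) (hg : Continuous g)
    (hF : ContinuousOn F (s ∩ {x | f x ≤ g x})) (hG : ContinuousOn G (s ∩ {x | g x ≤ f x}))
    (hFG : ∀ x ∈ s, f x = g x → F x = G x) :
    ContinuousOn (fun x => if f x ≤ g x then F x else G x) s := by
  refine ContinuousOn.if (fun x hx => hFG x hx.1 (frontier_le_subset_eq hf hg hx.2)) ?_ ?_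
  · rwa [(isClosed_le hf hg).closure_eq]
  · simp only [not_le]
    exact hG.mono (inter_subset_inter_right _ (closure_lt_subset_le hg hf))

theorem image_affine_Icc_eq_uIcc (c m : ℝ) {a b : ℝ} (hab : a ≤ b) :
    (fun t => c + m * t) '' Icc a b = uIcc (c + m * a) (c + m * b) := by
  rw [← uIcc_of_le hab, show (fun t => c + m * t) = (c + ·) ∘ (m * ·) from rfl, image_comp,
    image_const_mul_uIcc, image_const_add_uIcc]

section Variation

variable {E : Type*} [PseudoEMetricSpace E]

theorem eVariationOn_comp_affine (f : ℝ → E) (c m : ℝ) {a b : ℝ} (hab : a ≤ b) :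
    eVariationOn (fun t => f (c + m * t)) (Icc a b)
      = eVariationOn f (uIcc (c + m * a) (c + m * b)) := by
  rw [← image_affine_Icc_eq_uIcc c m hab]
  rcases le_total 0 m with hm | hm
  · exact eVariationOn.comp_eq_of_monotoneOn f _
      fun x _ y _ hxy => by nlinarith
  · exact eVariationOn.comp_eq_of_antitoneOn f _
      fun x _ y _ hxy => by nlinarith

theorem Function.Periodic.eVariationOn_Icc_add {f : ℝ → E} {c : ℝ} (hf : Function.Periodic f c)
    (s t : ℝ) : eVariationOn f (Icc (s + c) (t + c)) = eVariationOn f (Icc s t) := by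
  rw [← image_add_const_Icc, ← eVariationOn.comp_eq_of_monotoneOn f (· + c)
    fun x _ y _ hxy => by simpa using hxy]
  exact congrArg (eVariationOn · _) (funext hf)

end Variation

theorem exists_mem_abs_sub_le_half_of_gaps {Y : Finset ℝ} {ε w : ℝ} (hε : 0 ≤ ε)
    (hgap : ∀ a ∈ Y, ∀ b ∈ Y, a < b → (∀ c ∈ Y, c ∉ Ioo a b) → b - a ≤ ε)
    (hlo : ∃ a ∈ Y, a ≤ w) (hhi : ∃ b ∈ Y, w ≤ b) : ∃ v ∈ Y, |v - w| ≤ ε / 2 := by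
  classical
  obtain ⟨a, ha, haw, hamax⟩ : ∃ a ∈ Y, a ≤ w ∧ ∀ c ∈ Y, c ≤ w → c ≤ a := by
    obtain ⟨a, ha, hmax⟩ := (Y.filter (· ≤ w)).exists_max_image id
      (let ⟨a, ha, haw⟩ := hlo; ⟨a, Finset.mem_filter.2 ⟨ha, haw⟩⟩)
    simp only [Finset.mem_filter, id] at ha hmax
    exact ⟨a, ha.1, ha.2, fun c hc hcw => hmax c ⟨hc, hcw⟩⟩
  obtain ⟨b, hb, hwb, hbmin⟩ : ∃ b ∈ Y, w ≤ b ∧ ∀ c ∈ Y, w ≤ c → b ≤ c := by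
    obtain ⟨b, hb, hmin⟩ := (Y.filter (w ≤ ·)).exists_min_image id
      (let ⟨b, hb, hwb⟩ := hhi; ⟨b, Finset.mem_filter.2 ⟨hb, hwb⟩⟩)
    simp only [Finset.mem_filter, id] at hb hmin
    exact ⟨b, hb.1, hb.2, fun c hc hwc => hmin c ⟨hc, hwc⟩⟩
  have hba : b - a ≤ ε := by
    rcases (haw.trans hwb).lt_or_eq with hlt | heq
    · refine hgap a ha b hb hlt fun c hc hcab => ?_
      rcases le_total c w with hcw | hwc
      · exact (hamax c hc hcw).not_gt hcab.1
      · exact (hbmin c hc hwc).not_gt hcab.2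
    · linarith
  rcases le_total (w - a) (b - w) with h | h
  · exact ⟨a, ha, by rw [abs_of_nonpos (by linarith)]; linarith⟩
  · exact ⟨b, hb, by rw [abs_of_nonneg (by linarith)]; linarith⟩

section ConcatLoop

theorem concatLoop_index_spec {k : ℕ} (hk : 0 < k) {t : ℝ} (ht : t ∈ Icc (0 : ℝ) 1) :
    min ⌊t * k⌋₊ (k - 1) < k ∧ ((min ⌊t * k⌋₊ (k - 1) : ℕ) : ℝ) ≤ t * k ∧
      t * k ≤ (min ⌊t * k⌋₊ (k - 1) : ℕ) + 1 := by
  have htk : 0 ≤ t * k := mul_nonneg ht.1 k.cast_nonneg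
  refine ⟨(min_le_right _ _).trans_lt (Nat.sub_lt hk one_pos),
    (Nat.cast_le.2 (min_le_left _ _)).trans (Nat.floor_le htk), ?_⟩
  rcases le_total ⌊t * k⌋₊ (k - 1) with h | h
  · rw [min_eq_left h]
    exact (Nat.lt_floor_add_one _).le
  · rw [min_eq_right h, Nat.cast_sub hk, Nat.cast_one, sub_add_cancel]
    nlinarith [ht.2, (k.cast_nonneg : (0 : ℝ) ≤ k)]

theorem exists_concatLoop_eq {k : ℕ} (hk : 0 < k) {t : ℝ} (ht : t ∈ Icc (0 : ℝ) 1) :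
    ∃ i < k, ∃ u ∈ Icc (0 : ℝ) 1, ∀ π : ℕ → ℝ → Plane, concatLoop k π t = π i u := by
  obtain ⟨hi, h₁, h₂⟩ := concatLoop_index_spec hk ht
  exact ⟨_, hi, _, ⟨by linarith, by linarith⟩, fun π => rfl⟩

theorem concatLoop_zero (k : ℕ) (π : ℕ → ℝ → Plane) : concatLoop k π 0 = π 0 0 := by
  simp [concatLoop]

theorem concatLoop_one {k : ℕ} (hk : 0 < k) (π : ℕ → ℝ → Plane) :
    concatLoop k π 1 = π (k - 1) 1 := by
  simp [concatLoop, Nat.cast_sub hk]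

theorem concatLoop_of_mem_strip {k j : ℕ} (hj : j < k) {π : ℕ → ℝ → Plane}
    (hmatch : j + 1 < k → π j 1 = π (j + 1) 0) {t : ℝ} (h₁ : (j : ℝ) ≤ t * k)
    (h₂ : t * k ≤ j + 1) : concatLoop k π t = π j (t * k - j) := by
  rcases h₂.lt_or_eq with hlt | heq
  · have hfl : ⌊t * k⌋₊ = j := (Nat.floor_eq_iff ((j.cast_nonneg).trans h₁)).2 ⟨h₁, hlt⟩
    simp only [concatLoop, hfl, min_eq_left (Nat.le_sub_one_of_lt hj)]
  · have hfl : ⌊t * k⌋₊ = j + 1 := by rw [heq]; exact_mod_cast Nat.floor_natCast (j + 1)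
    rcases (Nat.succ_le_of_lt hj).lt_or_eq with hj1 | hj1
    · change π (min ⌊t * k⌋₊ (k - 1)) (t * k - (min ⌊t * k⌋₊ (k - 1) : ℕ)) = _
      rw [hfl, min_eq_left (Nat.le_sub_one_of_lt hj1), heq, add_sub_cancel_left, hmatch hj1]
      push_cast
      rw [sub_self]
    · simp only [concatLoop, hfl, show k - 1 = j by omega, min_eq_right (Nat.le_succ j)]

theorem continuousOn_concatLoop {k : ℕ} (hk : 0 < k) (H : ℕ → ℝ → ℝ → Plane)
    (hcont : ∀ j < k, ContinuousOn (fun p : ℝ × ℝ => H j p.1 p.2) (Icc 0 1 ×ˢ Icc 0 1))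
    (hmatch : ∀ j, j + 1 < k → ∀ s ∈ Icc (0 : ℝ) 1, H j s 1 = H (j + 1) s 0) :
    ContinuousOn (fun p : ℝ × ℝ => concatLoop k (fun j => H j p.1) p.2)
      (Icc 0 1 ×ˢ Icc 0 1) := by
  let strip : Fin k → Set (ℝ × ℝ) := fun j =>
    Icc 0 1 ×ˢ {t | (j : ℝ) ≤ t * k ∧ t * k ≤ j + 1}
  have hcover : Icc 0 1 ×ˢ Icc 0 1 = ⋃ j, strip j := by
    ext ⟨s, t⟩
    simp only [mem_iUnion, mem_prod, strip, mem_ofPred_eq]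
    constructor
    · rintro ⟨hs, ht⟩
      obtain ⟨hi, h₁, h₂⟩ := concatLoop_index_spec hk ht
      exact ⟨⟨_, hi⟩, hs, h₁, h₂⟩
    · rintro ⟨j, hs, h₁, h₂⟩
      have : ((j : ℕ) : ℝ) + 1 ≤ k := by exact_mod_cast j.isLt
      exact ⟨hs, by nlinarith [(j : ℕ).cast_nonneg (α := ℝ)], by nlinarith⟩
  rw [hcover]
  refine (locallyFinite_of_finite strip).continuousOn_iUnion (fun j => ?_) (fun j => ?_)
  · exact isClosed_Icc.prod
      ((isClosed_le continuous_const (continuous_id.mul continuous_const)).inter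
        (isClosed_le (continuous_id.mul continuous_const) continuous_const))
  · refine ContinuousOn.congr (f := fun p : ℝ × ℝ => H j p.1 (p.2 * k - j)) ?_ ?_
    · refine (hcont j j.isLt).comp (f := fun p : ℝ × ℝ => (p.1, p.2 * k - j))
        (Continuous.continuousOn (by fun_prop))
        fun p (hp : p ∈ strip j) => ⟨hp.1, sub_nonneg.2 hp.2.1, by linarith [hp.2.2]⟩
    · rintro ⟨s, t⟩ ⟨hs, h₁, h₂⟩
      exact concatLoop_of_mem_strip j.isLt (fun hj => hmatch j hj s hs) h₁ h₂

end ConcatLoop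

section SpikedPath

variable {E : Type*}

/-- Runs `α` backwards from `α s` to `α 0`, then `p`, then `β` from `β 0` to `β s`. At `s = 0`
this is `p`, so varying `s` is a homotopy from `p` that moves the endpoints along `α` and `β`. -/
def spikedPath (α p β : ℝ → E) (s t : ℝ) : E :=
  if t ≤ s / 4 then α (s - 4 * t)
  else if t ≤ 1 - s / 4 then p ((t - s / 4) / (1 - s / 2))
  else β (4 * t - 4 + s)

variable {α p β : ℝ → E}

theorem spikedPath_apply_zero {s : ℝ} (hs : 0 ≤ s) : spikedPath α p β s 0 = α s := by
  rw [spikedPath, if_pos (by linarith), mul_zero, sub_zero]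

theorem spikedPath_apply_one (hpβ : p 1 = β 0) {s : ℝ} (hs : s ∈ Icc (0 : ℝ) 1) :
    spikedPath α p β s 1 = β s := by
  rw [spikedPath, if_neg (by linarith [hs.2])]
  split_ifs with h
  · obtain rfl : s = 0 := by linarith [hs.1]
    norm_num [hpβ]
  · congr 1
    ring

theorem spikedPath_zero_apply (hαp : α 0 = p 0) {t : ℝ} (ht : t ∈ Icc (0 : ℝ) 1) :
    spikedPath α p β 0 t = p t := by
  rw [spikedPath]
  split_ifs with h₁
  · obtain rfl : t = 0 := by linarith [ht.1]
    norm_num [hαp]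
  · norm_num
  · exact absurd ht.2 (by linarith)

theorem spikedPath_mem {A : Set E} (hα : α '' Icc 0 1 ⊆ A) (hp : p '' Icc 0 1 ⊆ A)
    (hβ : β '' Icc 0 1 ⊆ A) {s t : ℝ} (hs : s ∈ Icc (0 : ℝ) 1) (ht : t ∈ Icc (0 : ℝ) 1) :
    spikedPath α p β s t ∈ A := by
  obtain ⟨hs₀, hs₁⟩ := hs
  obtain ⟨ht₀, ht₁⟩ := ht
  rw [spikedPath]
  split_ifs with h₁ h₂
  · exact hα ⟨_, ⟨by linarith, by linarith⟩, rfl⟩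
  · refine hp ⟨_, ⟨div_nonneg (by linarith) (by linarith), ?_⟩, rfl⟩
    rw [div_le_one (by linarith)]
    linarith
  · exact hβ ⟨_, ⟨by linarith, by linarith⟩, rfl⟩

variable [TopologicalSpace E]

theorem continuousOn_spikedPath (hα : Continuous α) (hp : ContinuousOn p (Icc 0 1))
    (hβ : Continuous β) (hαp : α 0 = p 0) (hpβ : p 1 = β 0) :
    ContinuousOn (fun x : ℝ × ℝ => spikedPath α p β x.1 x.2) (Icc 0 1 ×ˢ Icc 0 1) := by
  refine continuousOn_if_le continuous_snd (by fun_prop)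
    (Continuous.continuousOn (by fun_prop)) ?_ ?_
  · refine continuousOn_if_le continuous_snd (by fun_prop) ?_
      (Continuous.continuousOn (by fun_prop)) ?_
    · refine hp.comp (f := fun x : ℝ × ℝ => (x.2 - x.1 / 4) / (1 - x.1 / 2))
        (ContinuousOn.div (by fun_prop) (by fun_prop) fun x hx => ?_) fun x hx => ?_
      · obtain ⟨⟨⟨⟨hs₀, hs₁⟩, -⟩, -⟩, -⟩ := hx
        linarith
      · obtain ⟨⟨⟨⟨hs₀, hs₁⟩, -⟩, h₁⟩, h₂⟩ := hx
        refine ⟨div_nonneg (by linarith [h₁.out]) (by linarith), ?_⟩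
        rw [div_le_one (by linarith)]
        linarith [h₂.out]
    · rintro ⟨s, t⟩ ⟨⟨⟨hs₀, hs₁⟩, -⟩, -⟩ (heq : t = 1 - s / 4)
      rw [heq, show 1 - s / 4 - s / 4 = 1 - s / 2 by ring, div_self (by linarith), hpβ]
      congr 1
      ring
  · rintro ⟨s, t⟩ ⟨⟨hs₀, hs₁⟩, -⟩ (heq : t = s / 4)
    dsimp only
    rw [if_pos (by linarith), heq, sub_self, zero_div, show s - 4 * (s / 4) = 0 by ring, hαp]

end SpikedPath

section SpikedPathVariation

variable {E : Type*} [PseudoEMetricSpace E] {α p β : ℝ → E}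

theorem eVariationOn_spikedPath_one (hαp : α 0 = p 0) (hpβ : p 1 = β 0) :
    eVariationOn (spikedPath α p β 1) (Icc 0 1) =
      eVariationOn α (Icc 0 1) + eVariationOn p (Icc 0 1) + eVariationOn β (Icc 0 1) := by
  have hsplit := eVariationOn.Icc_add_Icc (spikedPath α p β 1) (s := univ)
    (a := 0) (b := 1 / 4) (c := 1) (by norm_num) (by norm_num) trivial
  rw [← eVariationOn.Icc_add_Icc (spikedPath α p β 1) (s := univ) (a := 1 / 4) (b := 3 / 4)
    (c := 1) (by norm_num) (by norm_num) trivial] at hsplit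
  simp only [univ_inter] at hsplit
  have h₁ : EqOn (spikedPath α p β 1) (fun t => α (1 + -4 * t)) (Icc 0 (1 / 4)) := by
    intro t ht
    rw [spikedPath, if_pos ht.2]
    ring_nf
  have h₂ : EqOn (spikedPath α p β 1) (fun t => p (-(1 / 2) + 2 * t)) (Icc (1 / 4) (3 / 4)) := by
    rintro t ⟨ht₁, ht₂⟩
    rw [spikedPath]
    split_ifs with h h'
    · obtain rfl : t = 1 / 4 := by linarith
      norm_num [hαp]
    · congr 1
      ring
    · exact absurd ht₂ (by linarith)
  have h₃ : EqOn (spikedPath α p β 1) (fun t => β (-3 + 4 * t)) (Icc (3 / 4) 1) := by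
    rintro t ⟨ht₁, -⟩
    rw [spikedPath, if_neg (by linarith)]
    split_ifs with h
    · obtain rfl : t = 3 / 4 := by linarith
      norm_num [hpβ]
    · congr 1
      ring
  rw [← hsplit, add_assoc, eVariationOn.eq_of_eqOn h₁, eVariationOn.eq_of_eqOn h₂,
    eVariationOn.eq_of_eqOn h₃, eVariationOn_comp_affine _ _ _ (by norm_num),
    eVariationOn_comp_affine _ _ _ (by norm_num), eVariationOn_comp_affine _ _ _ (by norm_num)]
  norm_num [uIcc_of_ge, uIcc_of_le]

end SpikedPathVariation

theorem IsNullHomotopicIn.of_loopHomotopy {A : Set Plane} {f g : ℝ → Plane} {G : ℝ × ℝ → Plane}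
    (hG : ContinuousOn G (Icc 0 1 ×ˢ Icc 0 1)) (hGA : G '' (Icc 0 1 ×ˢ Icc 0 1) ⊆ A)
    (hG₀ : ∀ t ∈ Icc (0 : ℝ) 1, G (0, t) = f t) (hG₁ : ∀ t ∈ Icc (0 : ℝ) 1, G (1, t) = g t)
    (hloop : ∀ s ∈ Icc (0 : ℝ) 1, G (s, 0) = G (s, 1)) (hg : IsNullHomotopicIn A g) :
    IsNullHomotopicIn A f := by
  obtain ⟨H, hH, hHA, hH₀, hHloop, c, hc⟩ := hg
  refine ⟨fun x => if x.1 ≤ 1 / 2 then G (2 * x.1, x.2) else H (2 * x.1 - 1, x.2),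
    ?_, ?_, fun t ht => ?_, fun s hs => ?_, c, fun t ht => ?_⟩
  · refine continuousOn_if_le continuous_fst continuous_const
      (hG.comp (f := fun x : ℝ × ℝ => (2 * x.1, x.2)) (Continuous.continuousOn (by fun_prop))
        fun x ⟨⟨⟨hs₀, _⟩, ht⟩, hs⟩ => ⟨⟨by linarith, by linarith [hs.out]⟩, ht⟩)
      (hH.comp (f := fun x : ℝ × ℝ => (2 * x.1 - 1, x.2)) (Continuous.continuousOn (by fun_prop))
        fun x ⟨⟨⟨_, hs₁⟩, ht⟩, hs⟩ => ⟨⟨by linarith [hs.out], by linarith⟩, ht⟩)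
      fun x hx (hs : x.1 = 1 / 2) => ?_
    simp only [hs]
    norm_num [hG₁ x.2 hx.2, hH₀ x.2 hx.2]
  · rintro _ ⟨⟨s, t⟩, ⟨⟨hs₀, hs₁⟩, ht⟩, rfl⟩
    dsimp only
    split_ifs with h
    · exact hGA (mem_image_of_mem G ⟨⟨by linarith, by linarith⟩, ht⟩)
    · exact hHA (mem_image_of_mem H ⟨⟨by linarith, by linarith⟩, ht⟩)
  · norm_num [hG₀ t ht]
  · dsimp only
    split_ifs with h
    · exact hloop _ ⟨by linarith [hs.1], by linarith⟩
    · exact hHloop _ ⟨by linarith, by linarith [hs.2]⟩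
  · norm_num [hc t ht]

theorem IsNullHomotopicIn.of_concatLoop_spikedPath {A : Set Plane} {k : ℕ} (hk : 0 < k)
    {B π : ℕ → ℝ → Plane} (hB : ∀ i, Continuous (B i))
    (hπ : ∀ i < k, ContinuousOn (π i) (Icc 0 1))
    (hBπ : ∀ i < k, B i 0 = π i 0) (hπB : ∀ i < k, π i 1 = B ((i + 1) % k) 0)
    (hBA : ∀ i, B i '' Icc 0 1 ⊆ A) (hπA : ∀ i < k, π i '' Icc 0 1 ⊆ A)
    (hnull : IsNullHomotopicIn A
      (concatLoop k fun i => spikedPath (B i) (π i) (B ((i + 1) % k)) 1)) :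
    IsNullHomotopicIn A (concatLoop k π) := by
  set H : ℕ → ℝ → ℝ → Plane := fun i => spikedPath (B i) (π i) (B ((i + 1) % k))
  have hend : ∀ i < k, ∀ s ∈ Icc (0 : ℝ) 1, H i s 1 = B ((i + 1) % k) s :=
    fun i hi s hs => spikedPath_apply_one (hπB i hi) hs
  refine hnull.of_loopHomotopy (G := fun x => concatLoop k (fun j => H j x.1) x.2)
    (continuousOn_concatLoop hk H
      (fun i hi => continuousOn_spikedPath (hB i) (hπ i hi) (hB _) (hBπ i hi) (hπB i hi))
      fun j hj s hs => by
        rw [hend j (by omega) s hs, Nat.mod_eq_of_lt hj]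
        exact (spikedPath_apply_zero hs.1).symm)
    ?_ (fun t ht => ?_) (fun t ht => rfl) (fun s hs => ?_)
  · rintro _ ⟨⟨s, t⟩, ⟨hs : s ∈ Icc 0 1, ht : t ∈ Icc 0 1⟩, rfl⟩
    obtain ⟨i, hi, u, hu, heq⟩ := exists_concatLoop_eq hk ht
    change concatLoop k (fun j => H j s) t ∈ A
    rw [heq]
    exact spikedPath_mem (hBA i) (hπA i hi) (hBA _) hs hu
  · obtain ⟨i, hi, u, hu, heq⟩ := exists_concatLoop_eq hk ht
    rw [heq, heq]
    exact spikedPath_zero_apply (hBπ i hi) hu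
  · rw [concatLoop_zero, concatLoop_one hk, hend _ (by omega) s hs, Nat.sub_add_cancel hk,
      Nat.mod_self]
    exact spikedPath_apply_zero hs.1

namespace SimplePolygon

variable (P : SimplePolygon)

theorem γext_periodic : Function.Periodic P.γext P.L := fun t => by
  simp only [γext, add_div, div_self P.L_pos.ne', Int.fract_add_one]

theorem γext_of_mem_Icc {t : ℝ} (ht : t ∈ Icc 0 P.L) : P.γext t = P.γ t := by
  rcases ht.2.lt_or_eq with hlt | rfl
  · rw [γext, Int.fract_eq_self.2 ⟨div_nonneg ht.1 P.L_pos.le, (div_lt_one P.L_pos).2 hlt⟩,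
      div_mul_cancel₀ _ P.L_pos.ne']
  · simp [γext, div_self P.L_pos.ne', P.closed]

theorem γext_mem_toSet (t : ℝ) : P.γext t ∈ P.toSet :=
  ⟨_, ⟨mul_nonneg (Int.fract_nonneg _) P.L_pos.le,
    mul_le_of_le_one_left P.L_pos.le (Int.fract_lt_one _).le⟩, rfl⟩

theorem continuous_γext : Continuous P.γext := by
  have hc : ContinuousOn (fun u => P.γ (u * P.L)) (Icc 0 1) :=
    P.continuousOn_γ.comp (by fun_prop) fun u hu =>
      ⟨mul_nonneg hu.1 P.L_pos.le, mul_le_of_le_one_left P.L_pos.le hu.2⟩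
  exact (hc.comp_fract'' (by simp [P.closed])).comp (continuous_id.div_const P.L)

theorem eVariationOn_γext_of_le_add {s t : ℝ} (hst : s ≤ t) (hts : t ≤ s + P.L) :
    eVariationOn P.γext (Icc s t) = ENNReal.ofReal (t - s) := by
  have hL := P.L_pos
  have hbase : ∀ u v, 0 ≤ u → u ≤ v → v ≤ P.L →
      eVariationOn P.γext (Icc u v) = ENNReal.ofReal (v - u) := fun u v hu huv hv => by
    rw [eVariationOn.eq_of_eqOn fun x hx => P.γext_of_mem_Icc ⟨hu.trans hx.1, hx.2.trans hv⟩]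
    exact P.arclength hu huv hv
  set n := ⌊s / P.L⌋
  set s' := s - n * P.L with hs'_def
  have hs' : s' ∈ Ico 0 P.L := by
    have h₁ := Int.floor_le (s / P.L)
    have h₂ := Int.lt_floor_add_one (s / P.L)
    rw [le_div_iff₀ hL] at h₁
    rw [div_lt_iff₀ hL] at h₂
    exact ⟨by linarith, by linarith⟩
  have hshift := (P.γext_periodic.int_mul n).eVariationOn_Icc_add s' (t - n * P.L)
  rw [sub_add_cancel, sub_add_cancel] at hshift
  rw [hshift, show t - s = (t - n * P.L) - s' by ring]
  rcases le_total (t - n * P.L) P.L with h | h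
  · exact hbase _ _ hs'.1 (by linarith) h
  · have hsplit := eVariationOn.Icc_add_Icc P.γext (s := univ) hs'.2.le h trivial
    have hsecond := P.γext_periodic.eVariationOn_Icc_add 0 (t - n * P.L - P.L)
    rw [zero_add, sub_add_cancel, hbase _ _ le_rfl (by linarith) (by linarith [hs'.2])] at hsecond
    simp only [univ_inter] at hsplit
    rw [← hsplit, hbase _ _ hs'.1 hs'.2.le le_rfl, hsecond,
      ← ENNReal.ofReal_add (by linarith [hs'.2]) (by linarith)]
    congr 1
    ring

theorem eVariationOn_γext {s t : ℝ} (hst : s ≤ t) :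
    eVariationOn P.γext (Icc s t) = ENNReal.ofReal (t - s) := by
  have hL := P.L_pos
  suffices h : ∀ n : ℕ, ∀ s t : ℝ, s ≤ t → t ≤ s + (n + 1) * P.L →
      eVariationOn P.γext (Icc s t) = ENNReal.ofReal (t - s) by
    obtain ⟨n, hn⟩ := exists_nat_ge ((t - s) / P.L)
    exact h n s t hst (by rw [div_le_iff₀ hL] at hn; nlinarith)
  intro n
  induction n with
  | zero => exact fun s t hst hts => P.eVariationOn_γext_of_le_add hst (by simpa using hts)
  | succ n ih =>
    intro s t hst hts
    rcases le_total t (s + P.L) with h | h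
    · exact P.eVariationOn_γext_of_le_add hst h
    have hsplit := eVariationOn.Icc_add_Icc P.γext (s := univ) (by linarith : s ≤ s + P.L) h trivial
    simp only [univ_inter] at hsplit
    rw [← hsplit, P.eVariationOn_γext_of_le_add (by linarith) le_rfl,
      ih _ _ h (by push_cast at hts; linarith), ← ENNReal.ofReal_add (by linarith) (by linarith)]
    congr 1
    ring

theorem eVariationOn_γext_affine (x y : ℝ) :
    eVariationOn (fun u => P.γext (x + (y - x) * u)) (Icc 0 1) = ENNReal.ofReal |y - x| := by
  rw [eVariationOn_comp_affine _ _ _ zero_le_one, mul_zero, add_zero, mul_one, add_sub_cancel,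
    uIcc, P.eVariationOn_γext inf_le_sup, max_sub_min_eq_abs]

theorem ordFrom_spec {t0 : ℝ} (ht0 : t0 ∈ Ico 0 P.L) {x : Plane} (hx : x ∈ P.toSet) :
    P.ordFrom t0 x ∈ Ico 0 P.L ∧ P.γext (t0 + P.ordFrom t0 x) = x := by
  have hex : ∃ t, t ∈ Ico 0 P.L ∧ P.γ t = x := by
    obtain ⟨u, hu, rfl⟩ := hx
    rcases hu.2.lt_or_eq with h | rfl
    · exact ⟨u, ⟨hu.1, h⟩, rfl⟩
    · exact ⟨0, ⟨le_rfl, P.L_pos⟩, P.closed⟩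
  obtain ⟨⟨hp₀, hpL⟩, hpx⟩ : P.param x ∈ Ico 0 P.L ∧ P.γ (P.param x) = x := by
    rw [param, dif_pos hex]
    exact hex.choose_spec
  rw [ordFrom]
  split_ifs with h
  · refine ⟨⟨by linarith [ht0.2], by linarith [ht0.1]⟩, ?_⟩
    rw [show t0 + (P.param x + P.L - t0) = P.param x + P.L by ring, P.γext_periodic,
      P.γext_of_mem_Icc ⟨hp₀, hpL.le⟩, hpx]
  · refine ⟨⟨by linarith, by linarith [ht0.1]⟩, ?_⟩
    rw [add_sub_cancel, P.γext_of_mem_Icc ⟨hp₀, hpL.le⟩, hpx]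

theorem ordFrom_self {t0 : ℝ} (ht0 : t0 ∈ Ico 0 P.L) : P.ordFrom t0 (P.γ t0) = 0 := by
  have hex : ∃ t, t ∈ Ico 0 P.L ∧ P.γ t = P.γ t0 := ⟨t0, ht0, rfl⟩
  have hparam : P.param (P.γ t0) = t0 := by
    rw [param, dif_pos hex]
    exact P.injOn hex.choose_spec.1 ht0 hex.choose_spec.2
  simp [ordFrom, hparam]

end SimplePolygon

namespace SimplePolygon

variable {P : SimplePolygon}

theorem region_subset_ne_of_mem_intSet {q : Plane} (hq : q ∈ P.intSet) :
    P.region ⊆ {x | x ≠ q} := by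
  rintro x hx rfl
  exact hx.elim hq.1 fun h => h.2 hq.2

theorem IsSolution.exists_move_stations {d δ : ℝ} (hd : 0 ≤ d) {k : ℕ} {z : ℕ → Plane}
    {π : ℕ → ℝ → Plane} (hsol : P.IsSolution d k z π) {w a : ℕ → ℝ}
    (hw : ∀ i < k, P.γext (w i) = z i) (hwa : ∀ i < k, |a i - w i| ≤ δ) :
    ∃ π' : ℕ → ℝ → Plane, P.IsSolution (d + 2 * δ) k (fun i => P.γext (a i)) π' := by
  obtain ⟨hk, -, hpath, hvar, hencl⟩ := hsol
  have hδ : 0 ≤ δ := (abs_nonneg _).trans (hwa 0 hk)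
  set B : ℕ → ℝ → Plane := fun i u => P.γext (w i + (a i - w i) * u)
  have hB : ∀ i, Continuous (B i) := fun i => P.continuous_γext.comp (by fun_prop)
  have hB₀ : ∀ i, B i 0 = P.γext (w i) := fun i => by simp [B]
  have hB₁ : ∀ i, B i 1 = P.γext (a i) := fun i => by simp [B]
  have hBπ : ∀ i < k, B i 0 = π i 0 := fun i hi => by rw [hB₀, hw i hi, (hpath i hi).2.1]
  have hπB : ∀ i < k, π i 1 = B ((i + 1) % k) 0 := fun i hi => by
    rw [hB₀, hw _ (Nat.mod_lt _ hk), (hpath i hi).2.2.1]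
  have hBA : ∀ i, B i '' Icc 0 1 ⊆ P.region := by
    rintro i _ ⟨u, -, rfl⟩
    exact Or.inl (P.γext_mem_toSet _)
  set π' : ℕ → ℝ → Plane := fun i => spikedPath (B i) (π i) (B ((i + 1) % k)) 1
  refine ⟨π', hk, fun i _ => P.γext_mem_toSet _, fun i hi => ⟨?_, ?_, ?_, ?_⟩,
    fun i hi => ?_, fun q hq hnull => ?_⟩
  · exact (continuousOn_spikedPath (hB i) (hpath i hi).1 (hB _) (hBπ i hi) (hπB i hi)).comp
      (f := fun t => ((1 : ℝ), t)) (by fun_prop) fun t ht => ⟨⟨zero_le_one, le_rfl⟩, ht⟩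
  · exact (spikedPath_apply_zero zero_le_one).trans (hB₁ i)
  · exact (spikedPath_apply_one (hπB i hi) ⟨zero_le_one, le_rfl⟩).trans (hB₁ _)
  · rintro _ ⟨t, ht, rfl⟩
    exact spikedPath_mem (hBA i) (hpath i hi).2.2.2 (hBA _) ⟨zero_le_one, le_rfl⟩ ht
  · calc eVariationOn (π' i) (Icc 0 1)
        = ENNReal.ofReal |a i - w i| + eVariationOn (π i) (Icc 0 1) +
            ENNReal.ofReal |a ((i + 1) % k) - w ((i + 1) % k)| := by
          rw [eVariationOn_spikedPath_one (hBπ i hi) (hπB i hi), P.eVariationOn_γext_affine,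
            P.eVariationOn_γext_affine]
      _ ≤ ENNReal.ofReal δ + ENNReal.ofReal d + ENNReal.ofReal δ := by
          gcongr
          exacts [hwa i hi, hvar i hi, hwa _ (Nat.mod_lt _ hk)]
      _ = ENNReal.ofReal (d + 2 * δ) := by
          rw [← ENNReal.ofReal_add hδ hd, ← ENNReal.ofReal_add (by positivity) hδ]
          congr 1
          ring
  · refine hencl q hq (hnull.of_concatLoop_spikedPath hk hB (fun i hi => (hpath i hi).1)
      hBπ hπB (fun i => ?_) (fun i hi => ?_))
    exacts [(hBA i).trans (region_subset_ne_of_mem_intSet hq),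
      (hpath i hi).2.2.2.trans (region_subset_ne_of_mem_intSet hq)]

theorem IsSolution.exists_stations_mem_of_gaps {d ε : ℝ} (hd : 0 ≤ d) (hε : 0 ≤ ε) {t0 : ℝ}
    (ht0 : t0 ∈ Ico 0 P.L) {X : Finset ℝ} (hX0 : (0 : ℝ) ∈ X) (hXsub : ↑X ⊆ Ico 0 P.L)
    (hgap : ∀ a ∈ X, ∀ b ∈ insert P.L X, a < b → (∀ c ∈ X, c ∉ Ioo a b) → b - a ≤ ε)
    {k : ℕ} {z : ℕ → Plane} {π : ℕ → ℝ → Plane} (hsol : P.IsSolution d k z π) :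
    ∃ (z' : ℕ → Plane) (π' : ℕ → ℝ → Plane), P.IsSolution (d + ε) k z' π' ∧
      (∀ i < k, ∃ w ∈ X, z' i = P.γext (t0 + w)) ∧ ∀ i < k, z i = P.γ t0 → z' i = P.γ t0 := by
  classical
  have hle : ∀ b ∈ insert P.L X, b ≤ P.L := fun b hb =>
    (Finset.mem_insert.1 hb).elim le_of_eq fun hb => (hXsub hb).2.le
  have hgap' : ∀ a ∈ insert P.L X, ∀ b ∈ insert P.L X, a < b →
      (∀ c ∈ insert P.L X, c ∉ Ioo a b) → b - a ≤ ε := fun a ha b hb hab hc => by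
    refine hgap a ?_ b hb hab fun c hc' => hc c (Finset.mem_insert_of_mem hc')
    exact (Finset.mem_insert.1 ha).resolve_left fun h => (hle b hb).not_gt (h ▸ hab)
  set o : ℕ → ℝ := fun i => P.ordFrom t0 (z i)
  have hsnap : ∀ i, ∃ v, i < k → v ∈ insert P.L X ∧ |v - o i| ≤ ε / 2 ∧ (o i ∈ X → v = o i) := by
    intro i
    by_cases hi : i < k
    · by_cases hoX : o i ∈ X
      · refine ⟨o i, fun _ => ⟨Finset.mem_insert_of_mem hoX, ?_, fun _ => rfl⟩⟩
        rw [sub_self, abs_zero]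
        positivity
      obtain ⟨ho₀, hoL⟩ := (P.ordFrom_spec ht0 (hsol.2.1 i hi)).1
      obtain ⟨v, hv, hvo⟩ := exists_mem_abs_sub_le_half_of_gaps hε hgap'
        ⟨0, Finset.mem_insert_of_mem hX0, ho₀⟩ ⟨P.L, Finset.mem_insert_self _ _, hoL.le⟩
      exact ⟨v, fun _ => ⟨hv, hvo, fun h => absurd h hoX⟩⟩
    · exact ⟨0, fun h => absurd h hi⟩
  choose v hv using hsnap
  obtain ⟨π', hπ'⟩ := hsol.exists_move_stations hd (w := fun i => t0 + o i)
    (a := fun i => t0 + v i) (fun i hi => (P.ordFrom_spec ht0 (hsol.2.1 i hi)).2)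
    fun i hi => by simpa using (hv i hi).2.1
  refine ⟨_, π', by rwa [mul_div_cancel₀ _ two_ne_zero] at hπ', fun i hi => ?_, fun i hi hzi => ?_⟩
  · rcases Finset.mem_insert.1 (hv i hi).1 with h | h
    · exact ⟨0, hX0, by rw [h, add_zero, P.γext_periodic]⟩
    · exact ⟨v i, h, rfl⟩
  · have ho : o i = 0 := by simp only [o, hzi, P.ordFrom_self ht0]
    simp only [(hv i hi).2.2 (ho ▸ hX0), ho, add_zero]
    exact P.γext_of_mem_Icc ⟨ht0.1, ht0.2.le⟩

end SimplePolygon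

theorem discretization_certificate_general (P : SimplePolygon) (d ε : ℝ)
    (hd : 0 < d) (hε : 0 < ε)
    (t0 : ℝ) (ht0 : t0 ∈ Set.Ico 0 P.L)
    (X : Finset ℝ) (hX0 : (0 : ℝ) ∈ X) (hXsub : ↑X ⊆ Set.Ico 0 P.L)
    (hgap : ∀ a ∈ X, ∀ b ∈ insert P.L X, a < b →
      (∀ c ∈ X, c ∉ Set.Ioo a b) → b - a ≤ ε)
    (k : ℕ)
    (hk : IsLeast {n : ℕ | ∃ (z : ℕ → Plane) (π : ℕ → ℝ → Plane),
      P.IsSolution d n z π ∧ ∃ i < n, z i = P.γ t0} k) :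
    (∀ (n : ℕ) (z : ℕ → Plane) (π : ℕ → ℝ → Plane),
      P.IsSolution d n z π →
      (∀ i < n, ∃ w ∈ X, z i = P.γext (t0 + w)) →
      (∃ i < n, z i = P.γ t0) → k ≤ n) ∧
    (∃ (n : ℕ) (z : ℕ → Plane) (π : ℕ → ℝ → Plane),
      P.IsSolution (d + ε) n z π ∧
      (∀ i < n, ∃ w ∈ X, z i = P.γext (t0 + w)) ∧
      (∃ i < n, z i = P.γ t0) ∧ n ≤ k) ∧
    (∀ m m' : ℕ,
      IsLeast {n : ℕ | ∃ (z : ℕ → Plane) (π : ℕ → ℝ → Plane),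
        P.IsSolution d n z π ∧
        (∀ i < n, ∃ w ∈ X, z i = P.γext (t0 + w)) ∧
        ∃ i < n, z i = P.γ t0} m →
      IsLeast {n : ℕ | ∃ (z : ℕ → Plane) (π : ℕ → ℝ → Plane),
        P.IsSolution (d + ε) n z π ∧
        (∀ i < n, ∃ w ∈ X, z i = P.γext (t0 + w)) ∧
        ∃ i < n, z i = P.γ t0} m' →
      m = m' → m = k) := by
  obtain ⟨z, π, hsol, i0, hi0, hz0⟩ := hk.1
  obtain ⟨z', π', hsol', hX', hz0'⟩ :=
    hsol.exists_stations_mem_of_gaps hd.le hε.le ht0 hX0 hXsub hgap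
  have hsnapped : ∃ i < k, z' i = P.γ t0 := ⟨i0, hi0, hz0' i0 hi0 hz0⟩
  refine ⟨fun n z π hsol _ hs0 => hk.2 ⟨z, π, hsol, hs0⟩, ⟨k, z', π', hsol', hX', hsnapped, le_rfl⟩,
    fun m m' hm hm' hmm => le_antisymm ?_ ?_⟩
  · exact hmm ▸ hm'.2 ⟨z', π', hsol', hX', hsnapped⟩
  · obtain ⟨z, π, hsol, -, hs0⟩ := hm.1
    exact hk.2 ⟨z, π, hsol, hs0⟩

/-- **discretization certificate.** Let `P` be a simple
polygon, `d > 0`, `ε > 0`, and let `s_0 = γ t0` lie on the boundary of the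
convex hull of `P`.  Let `X` be a finite set of clockwise boundary offsets
(from `t0`) containing `0` (i.e. the point `s_0`) and every vertex of `P`,
such that any two consecutive points of `X` along `P` are at boundary
distance at most `ε`.  Suppose there is a solution for range `d` containing
`s_0`, and let `k` be the minimum number of stations among all such
solutions.  Then:
(i) every solution for range `d` whose stations all lie in `X` and include
`s_0` has at least `k` stations;
(ii) there is a solution for range `d + ε` whose stations all lie in `X`,
include `s_0`, and number at most `k`; and in particular,
(iii) if the minimum numbers of stations among `X`-station solutions
containing `s_0` for ranges `d` and `d + ε` are equal, then this common
value equals `k`. -/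
theorem discretization_certificate (P : SimplePolygon) (d ε : ℝ)
    (hd : 0 < d) (hε : 0 < ε)
    (t0 : ℝ) (ht0 : t0 ∈ Set.Ico 0 P.L)
    (hch : P.γ t0 ∈ frontier (convexHull ℝ P.toSet))
    (X : Finset ℝ) (hX0 : (0 : ℝ) ∈ X) (hXsub : ↑X ⊆ Set.Ico 0 P.L)
    (hXvert : ∀ u ∈ P.vparams, ∃ w ∈ X, P.γext (t0 + w) = P.γ u)
    (hgap : ∀ a ∈ X, ∀ b ∈ insert P.L X, a < b →
      (∀ c ∈ X, c ∉ Set.Ioo a b) → b - a ≤ ε)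
    (hex : ∃ (n : ℕ) (z : ℕ → Plane) (π : ℕ → ℝ → Plane),
      P.IsSolution d n z π ∧ ∃ i < n, z i = P.γ t0)
    (k : ℕ)
    (hk : IsLeast {n : ℕ | ∃ (z : ℕ → Plane) (π : ℕ → ℝ → Plane),
      P.IsSolution d n z π ∧ ∃ i < n, z i = P.γ t0} k) :
    (∀ (n : ℕ) (z : ℕ → Plane) (π : ℕ → ℝ → Plane),
      P.IsSolution d n z π →
      (∀ i < n, ∃ w ∈ X, z i = P.γext (t0 + w)) →
      (∃ i < n, z i = P.γ t0) → k ≤ n) ∧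
    (∃ (n : ℕ) (z : ℕ → Plane) (π : ℕ → ℝ → Plane),
      P.IsSolution (d + ε) n z π ∧
      (∀ i < n, ∃ w ∈ X, z i = P.γext (t0 + w)) ∧
      (∃ i < n, z i = P.γ t0) ∧ n ≤ k) ∧
    (∀ m m' : ℕ,
      IsLeast {n : ℕ | ∃ (z : ℕ → Plane) (π : ℕ → ℝ → Plane),
        P.IsSolution d n z π ∧
        (∀ i < n, ∃ w ∈ X, z i = P.γext (t0 + w)) ∧
        ∃ i < n, z i = P.γ t0} m →
      IsLeast {n : ℕ | ∃ (z : ℕ → Plane) (π : ℕ → ℝ → Plane),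
        P.IsSolution (d + ε) n z π ∧
        (∀ i < n, ∃ w ∈ X, z i = P.γext (t0 + w)) ∧
        ∃ i < n, z i = P.γ t0} m' →
      m = m' → m = k) :=
  discretization_certificate_general P d ε hd hε t0 ht0 X hX0 hXsub hgap k hk
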